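/- Let G = (V, E) be a cubic graph and let (X, Y) be the corresponding instance of MLA. Then every symbol of the alphabet occurs at most 5 times in X, and every symbol occurs at most 5 times in Y. -/

import Mathlib

namespace MLA

/-! ### Generic labelings of aligned genomes -/

/-- An operation labeling a substring of the genome `X`: the substring of length
`len` starting at position `start`; `src = none` means a loss, `src = some s`
means a duplication coming from the identical occurrence starting at `s`. -/
structure Op where
  start : ℕ
  len : ℕ
  src : Option ℕ
deriving DecidableEq

/-- Cost of an operation: a duplication costs `1`, a loss of length `z` costs `z`. -/
def Op.cost (o : Op) : ℕ := if o.src = none then o.len else 1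

/-- The positions covered by (the target substring of) an operation. -/
def Op.covers (o : Op) (p : ℕ) : Prop := o.start ≤ p ∧ p < o.start + o.len

instance (o : Op) (p : ℕ) : Decidable (o.covers p) := by
  unfold Op.covers; infer_instance

/-- Validity of an operation with respect to the genome `X`: nonempty target
inside `X`, and a duplication comes from a different occurrence in `X` of a
string identical to its target substring. -/
def Op.valid {α : Type*} (X : List α) (o : Op) : Prop :=
  1 ≤ o.len ∧ o.start + o.len ≤ X.length ∧
    ∀ s, o.src = some s → s ≠ o.start ∧ s + o.len ≤ X.length ∧
      ∀ t < o.len, X[s + t]? = X[o.start + t]?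

/-- A duplication from occurrence `s` to occurrence `t` is maximal if the
characters immediately to the left of `s` and `t` differ (or one does not
exist) and likewise on the right. -/
def Op.maximalDup {α : Type*} (X : List α) (o : Op) : Prop :=
  ∃ s, o.src = some s ∧
    (s = 0 ∨ o.start = 0 ∨ X[s - 1]? ≠ X[o.start - 1]?) ∧
    (X[s + o.len]? = none ∨ X[o.start + o.len]? = none ∨
      X[s + o.len]? ≠ X[o.start + o.len]?)

/-- `L` is a labeling of the set `U` of unmatched positions of the genome `X`:
the target substrings of its operations are valid and partition `U`. -/
structure IsLabeling {α : Type*} (X : List α) (U : ℕ → Prop) (L : Finset Op) :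
    Prop where
  valid : ∀ o ∈ L, o.valid X
  unmatched : ∀ o ∈ L, ∀ p, o.covers p → U p
  covers : ∀ p, U p → ∃ o ∈ L, o.covers p
  disjoint : ∀ o ∈ L, ∀ o' ∈ L, ∀ p, o.covers p → o'.covers p → o = o'

/-- Arc of the duplication graph of a labeling: from the operation owning part
of the source occurrence of a duplication to the duplication itself. -/
def dupArc (L : Finset Op) (o o' : Op) : Prop :=
  o ∈ L ∧ o' ∈ L ∧ ∃ s, o'.src = some s ∧ ∃ p, o.covers p ∧ s ≤ p ∧ p < s + o'.len

/-- A labeling is feasible if its duplication graph has no cycle. -/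
def Feasible (L : Finset Op) : Prop := ∀ o, ¬ Relation.TransGen (dupArc L) o o

/-- Cost of a labeling. -/
def cost (L : Finset Op) : ℕ := ∑ o ∈ L, o.cost

/-- The operations of `L` labeling some position in `[lo, hi)`. -/
def restrict (L : Finset Op) (lo hi : ℕ) : Finset Op :=
  L.filter fun o => ∃ p ∈ Finset.Ico lo hi, o.covers p

/-- The total cost of the operations of `L` labeling positions in `[lo, hi)`. -/
def blockCost (L : Finset Op) (lo hi : ℕ) : ℕ := cost (restrict L lo hi)

/-! ### The reduction from Minimum Vertex Cover on cubic graphs -/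

/-- The alphabet of the reduction (all symbols are pairwise distinct). -/
inductive Sym (n : ℕ) : Type
  | s  (i : Fin n)
  | se (i j : Fin n)
  | x  (i : Fin n) (p : ℕ)
  | e  (i j : Fin n) (t : Fin 2)
  | z  (i : Fin n) (t : Fin 8)
  | w  (i : Fin n) (t : Fin 4)
  | u  (i : Fin n) (t : Fin 6)
deriving DecidableEq

variable {n : ℕ} (G : SimpleGraph (Fin n)) [DecidableRel G.Adj]

/-- The edges of `G` as pairs `(i, j)` with `i < j`, in lexicographic order. -/
def edgePairs : List (Fin n × Fin n) :=
  (List.finRange n).flatMap fun i =>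
    ((List.finRange n).filter fun j => decide (i < j ∧ G.Adj i j)).map fun j => (i, j)

/-- The edges incident to `i`, in edge order. -/
def incEdges (i : Fin n) : List (Fin n × Fin n) :=
  (edgePairs G).filter fun e => decide (e.1 = i ∨ e.2 = i)

/-- The `t`-th (`0`-based) edge incident to `i`. -/
def nthInc (i : Fin n) (t : ℕ) : Fin n × Fin n := (incEdges G i).getD t (i, i)

/-- The `0`-based index of edge `e` among the edges incident to `i`. -/
def edgeIdx (i : Fin n) (e : Fin n × Fin n) : ℕ := (incEdges G i).idxOf e

/-- Left part of the `i`-encoding of edge `e`. -/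
def encL (i : Fin n) (e : Fin n × Fin n) : List (Sym n) :=
  if i = e.1 then [.x i (edgeIdx G i e)] else [.e e.1 e.2 0, .e e.1 e.2 1]

/-- Right part of the `i`-encoding of edge `e`. -/
def encR (i : Fin n) (e : Fin n × Fin n) : List (Sym n) :=
  if i = e.1 then [.e e.1 e.2 0, .e e.1 e.2 1] else [.x i (edgeIdx G i e)]

/-- The `i`-encoding of edge `e`. -/
def enc (i : Fin n) (e : Fin n × Fin n) : List (Sym n) := encL G i e ++ encR G i e

/-- Block `B_{X-VE}(e)`. -/
def edgeBlockX (e : Fin n × Fin n) : List (Sym n) :=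
  [.se e.1 e.2, .x e.1 (edgeIdx G e.1 e), .e e.1 e.2 0, .e e.1 e.2 1,
   .x e.2 (edgeIdx G e.2 e)]

/-- Block `B_{X-VE}(v_i)`. -/
def vertexBlockX (i : Fin n) : List (Sym n) :=
  [.s i, .z i 0, .z i 1] ++ enc G i (nthInc G i 0) ++
  [.z i 2, .z i 3] ++ enc G i (nthInc G i 1) ++
  [.z i 4, .z i 5] ++ enc G i (nthInc G i 2) ++
  [.z i 6, .z i 7]

/-- Block `B_{X,A,1}(v_i) = B_{Y,A,1}(v_i)`. -/
def A1Block (i : Fin n) : List (Sym n) :=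
  [.w i 0, .z i 0, .z i 1, .w i 1, .z i 2, .z i 3,
   .w i 2, .z i 4, .z i 5, .w i 3, .z i 6, .z i 7]

/-- Block `B_{X,A,2}(v_i) = B_{Y,A,2}(v_i)`. -/
def A2Block (i : Fin n) : List (Sym n) :=
  [.u i 0, .z i 1] ++ encL G i (nthInc G i 0) ++ [.u i 1] ++ encR G i (nthInc G i 0) ++
  [.z i 2, .u i 2, .z i 3] ++ encL G i (nthInc G i 1) ++ [.u i 3] ++ encR G i (nthInc G i 1) ++
  [.z i 4, .u i 4, .z i 5] ++ encL G i (nthInc G i 2) ++ [.u i 5] ++ encR G i (nthInc G i 2) ++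
  [.z i 6]

/-- The genome `X` corresponding to the cubic graph `G`. -/
def genomeX : List (Sym n) :=
  ((List.finRange n).flatMap fun i => vertexBlockX G i) ++
  ((edgePairs G).flatMap fun e => edgeBlockX G e) ++
  ((List.finRange n).flatMap fun i => A1Block i ++ A2Block G i)

/-- The aligned genome `Y` (`none` denotes a gap). -/
def alignedY : List (Option (Sym n)) :=
  ((List.finRange n).flatMap fun i => some (.s i) :: List.replicate 17 none) ++
  ((edgePairs G).flatMap fun e => some (.se e.1 e.2) :: List.replicate 4 none) ++
  ((List.finRange n).flatMap fun i => (A1Block i ++ A2Block G i).map some)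

/-- The unmatched positions of `X` (those aligned with a gap of `Y`). -/
def UnmatchedX (p : ℕ) : Prop := (alignedY G)[p]? = some none

/-- Start position of `B_{X-VE}(v_i)` in `X`. -/
def vStart (i : Fin n) : ℕ := 18 * i.val

/-- Start position of `B_{X-VE}(e)` in `X`. -/
def eStart (e : Fin n × Fin n) : ℕ := 18 * n + 5 * (edgePairs G).idxOf e

/-- Start position of `B_{X,A,1}(v_i)` in `X` (`B_{X,A,2}(v_i)` starts 12 later). -/
def aStart (i : Fin n) : ℕ := 18 * n + 5 * (edgePairs G).length + 33 * i.val

/-- Offset of the `i`-encoding inside `B_{X-VE}(e)`. -/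
def encOff (i : Fin n) (e : Fin n × Fin n) : ℕ := if i = e.1 then 1 else 2

/-- The type-a labeling of `B_{X-VE}(v_i)`: four duplications coming from
`B_{X,A,1}(v_i)` (for the pairs of `z`-symbols) and three duplications coming
from the blocks of the three edges incident to `v_i` (for the encodings). -/
def typeA (i : Fin n) : Finset Op :=
  { ⟨vStart i + 1, 2, some (aStart G i + 1)⟩,
    ⟨vStart i + 6, 2, some (aStart G i + 4)⟩,
    ⟨vStart i + 11, 2, some (aStart G i + 7)⟩,
    ⟨vStart i + 16, 2, some (aStart G i + 10)⟩,
    ⟨vStart i + 3, 3, some (eStart G (nthInc G i 0) + encOff i (nthInc G i 0))⟩,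
    ⟨vStart i + 8, 3, some (eStart G (nthInc G i 1) + encOff i (nthInc G i 1))⟩,
    ⟨vStart i + 13, 3, some (eStart G (nthInc G i 2) + encOff i (nthInc G i 2))⟩ }

/-- The type-b labeling of `B_{X-VE}(v_i)`: six duplications coming from
`B_{X,A,2}(v_i)` and two losses of length one (for `z_{i,1}` and `z_{i,8}`). -/
def typeB (i : Fin n) : Finset Op :=
  let a := aStart G i + 12
  let l1 := (encL G i (nthInc G i 0)).length
  let l2 := (encL G i (nthInc G i 1)).length
  let l3 := (encL G i (nthInc G i 2)).length
  { ⟨vStart i + 1, 1, none⟩,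
    ⟨vStart i + 17, 1, none⟩,
    ⟨vStart i + 2, 1 + l1, some (a + 1)⟩,
    ⟨vStart i + 3 + l1, 4 - l1, some (a + 3 + l1)⟩,
    ⟨vStart i + 7, 1 + l2, some (a + 8)⟩,
    ⟨vStart i + 8 + l2, 4 - l2, some (a + 10 + l2)⟩,
    ⟨vStart i + 12, 1 + l3, some (a + 15)⟩,
    ⟨vStart i + 13 + l3, 4 - l3, some (a + 17 + l3)⟩ }

/-- The cost-2 labeling of `B_{X-VE}(e)` using a duplication coming from
`B_{X-VE}(v_i)` (where `i = e.1`) and a loss for the last character. -/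
def edgeLabA (e : Fin n × Fin n) : Finset Op :=
  { ⟨eStart G e + 1, 3, some (vStart e.1 + 3 + 5 * edgeIdx G e.1 e)⟩,
    ⟨eStart G e + 4, 1, none⟩ }

/-- The cost-2 labeling of `B_{X-VE}(e)` using a duplication coming from
`B_{X-VE}(v_j)` (where `j = e.2`) and a loss for the second character. -/
def edgeLabB (e : Fin n × Fin n) : Finset Op :=
  { ⟨eStart G e + 2, 3, some (vStart e.2 + 3 + 5 * edgeIdx G e.2 e)⟩,
    ⟨eStart G e + 1, 1, none⟩ }

/-- `C` is a vertex cover of `G`. -/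
def IsVC (C : Finset (Fin n)) : Prop := ∀ ⦃u v : Fin n⦄, G.Adj u v → u ∈ C ∨ v ∈ C

end MLA

/-!
Attach every symbol to at most two vertices (`Sym.vertices`: `e_{i,j,t}` to `v_i` and `v_j`,
every other vertex-indexed symbol to its own vertex) and to at most one edge (`Sym.edges`). A
symbol occurs only in the vertex blocks and `A`-blocks of its vertices and in the edge block of
its edge. In a cubic graph the first three edges at each vertex exist and are pairwise distinct,
so every single block is duplicate-free. Hence the vertex blocks of `X` contain a symbol at most
twice, the edge blocks at most once, and the `A`-blocks at most twice: the `B_{X,A,2}` blocks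
are again duplicate-free, and a symbol of some `B_{X,A,1}(v_i)` is attached to `v_i` alone. In
`Y` the symbols `s_i` and `s_{e,i,j}` add at most one occurrence each.
-/

theorem List.count_flatMap_le_card {α β : Type*} [BEq α] [LawfulBEq α] {l : List β}
    (hl : l.Nodup) {f : β → List α} (hf : ∀ b ∈ l, (f b).Nodup) {a : α} (S : Finset β)
    (hS : ∀ b ∈ l, a ∈ f b → b ∈ S) : (l.flatMap f).count a ≤ S.card := by
  classical
  rw [List.count_flatMap, ← List.sum_toFinset _ hl]
  calc ∑ b ∈ l.toFinset, (f b).count a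
      ≤ ∑ b ∈ l.toFinset, if b ∈ S then 1 else 0 := by
        refine Finset.sum_le_sum fun b hb => ?_
        rw [List.mem_toFinset] at hb
        split_ifs with hbS
        · exact List.nodup_iff_count_le_one.1 (hf b hb) a
        · exact (List.count_eq_zero.2 fun ha => hbS (hS b hb ha)).le
    _ = (l.toFinset.filter (· ∈ S)).card := by rw [Finset.sum_boole, Nat.cast_id]
    _ ≤ S.card := Finset.card_le_card fun b hb => (Finset.mem_filter.1 hb).2

theorem List.count_some_flatMap_cons_replicate_none {α β : Type*} [BEq α] [LawfulBEq α]
    (l : List β) (f : β → α) (m : ℕ) (a : α) :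
    (l.flatMap fun b => some (f b) :: List.replicate m none).count (some a) =
      (l.map f).count a := by
  induction l with
  | nil => rfl
  | cons b l ih =>
    simp only [List.flatMap_cons, List.map_cons, List.count_append, List.count_cons,
      List.count_replicate, ih, Option.some_beq_some, Option.none_beq_some, Bool.false_eq_true,
      ↓reduceIte, beq_iff_eq, zero_add]
    exact add_comm _ _

namespace MLA

variable {n : ℕ}

def Sym.vertices : Sym n → Finset (Fin n)
  | .s i | .x i _ | .z i _ | .w i _ | .u i _ => {i}
  | .se _ _ => ∅
  | .e i j _ => {i, j}

theorem Sym.card_vertices_le_two (a : Sym n) : a.vertices.card ≤ 2 := by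
  cases a <;> simp [Sym.vertices, Finset.card_le_two]

section Graph

variable (G : SimpleGraph (Fin n)) [DecidableRel G.Adj]

def Sym.edges (a : Sym n) : Finset (Fin n × Fin n) :=
  match a with
  | .se i j | .e i j _ => {(i, j)}
  | .x i p => {nthInc G i p}
  | _ => ∅

theorem Sym.card_edges_le_one (a : Sym n) : (a.edges G).card ≤ 1 := by
  cases a <;> simp [Sym.edges]

theorem mem_edgePairs {e : Fin n × Fin n} : e ∈ edgePairs G ↔ e.1 < e.2 ∧ G.Adj e.1 e.2 := by
  obtain ⟨i, j⟩ := e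
  simp [edgePairs]

theorem nodup_edgePairs : (edgePairs G).Nodup := by
  refine List.nodup_flatMap.2 ⟨fun i _ => ((List.nodup_finRange n).filter _).map
    (Prod.mk_right_injective i), (List.nodup_finRange n).pairwise_of_forall_ne ?_⟩
  intro i _ i' _ hi e he he'
  simp only [List.mem_map] at he he'
  obtain ⟨j, -, rfl⟩ := he
  obtain ⟨j', -, h⟩ := he'
  exact hi (congrArg Prod.fst h).symm

theorem mem_incEdges {i : Fin n} {e : Fin n × Fin n} :
    e ∈ incEdges G i ↔ e ∈ edgePairs G ∧ (e.1 = i ∨ e.2 = i) := by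
  simp [incEdges]

theorem nodup_incEdges (i : Fin n) : (incEdges G i).Nodup :=
  (nodup_edgePairs G).filter _

theorem degree_le_length_incEdges (i : Fin n) : G.degree i ≤ (incEdges G i).length := by
  classical
  calc G.degree i = (G.neighborFinset i).card := (G.card_neighborFinset_eq_degree i).symm
    _ ≤ (incEdges G i).toFinset.card :=
        Finset.card_le_card_of_injOn (fun j => (min i j, max i j)) ?_ ?_
    _ ≤ (incEdges G i).length := List.toFinset_card_le _
  · intro j hj
    rw [Finset.mem_coe, SimpleGraph.mem_neighborFinset] at hj
    simp only [Finset.mem_coe, List.mem_toFinset, mem_incEdges, mem_edgePairs]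
    rcases lt_or_gt_of_ne hj.ne with h | h
    · simp [min_eq_left h.le, max_eq_right h.le, h, hj]
    · simp [min_eq_right h.le, max_eq_left h.le, h, hj.symm]
  · intro j _ j' _ h
    simp only [Prod.mk.injEq, Fin.ext_iff, Fin.coe_min, Fin.coe_max] at h
    omega

end Graph

section IncidentEdges

variable {G : SimpleGraph (Fin n)} [DecidableRel G.Adj] {i : Fin n}

theorem nthInc_eq_getElem {t : ℕ} (ht : t < (incEdges G i).length) :
    nthInc G i t = (incEdges G i)[t] :=
  List.getD_eq_getElem _ _ ht

theorem edgeIdx_nthInc {t : ℕ} (ht : t < (incEdges G i).length) :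
    edgeIdx G i (nthInc G i t) = t := by
  simp [edgeIdx, nthInc_eq_getElem ht, nodup_incEdges]

theorem nthInc_edgeIdx {e : Fin n × Fin n} (he : e ∈ incEdges G i) :
    nthInc G i (edgeIdx G i e) = e := by
  rw [edgeIdx, nthInc_eq_getElem (List.idxOf_lt_length_iff.2 he), List.getElem_idxOf]

/-- Also true past the end of `incEdges G i`, where `nthInc` returns the junk value `(i, i)`. -/
theorem eq_fst_or_eq_snd_nthInc (t : ℕ) : i = (nthInc G i t).1 ∨ i = (nthInc G i t).2 := by
  by_cases ht : t < (incEdges G i).length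
  · rw [nthInc_eq_getElem ht, eq_comm, @eq_comm _ i]
    exact ((mem_incEdges G).1 (List.getElem_mem ht)).2
  · rw [nthInc, List.getD_eq_default _ _ (not_lt.1 ht)]
    exact Or.inl rfl

end IncidentEdges

section Encodings

variable (G : SimpleGraph (Fin n)) [DecidableRel G.Adj] (k : Fin n)

def encSyms (e : Fin n × Fin n) : List (Sym n) :=
  [.x k (edgeIdx G k e), .e e.1 e.2 0, .e e.1 e.2 1]

def incSyms : List (Sym n) :=
  encSyms G k (nthInc G k 0) ++ encSyms G k (nthInc G k 1) ++ encSyms G k (nthInc G k 2)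

theorem encL_append_encR_perm (e : Fin n × Fin n) :
    (encL G k e ++ encR G k e).Perm (encSyms G k e) := by
  unfold encL encR encSyms
  split_ifs
  · rfl
  · exact List.perm_append_comm

theorem vertexBlockX_perm :
    (vertexBlockX G k).Perm
      ([.s k, .z k 0, .z k 1, .z k 2, .z k 3, .z k 4, .z k 5, .z k 6, .z k 7] ++ incSyms G k) := by
  refine List.perm_iff_count.2 fun a => ?_
  have h t := (encL_append_encR_perm G k (nthInc G k t)).count_eq a
  have h0 := h 0; have h1 := h 1; have h2 := h 2
  simp only [vertexBlockX, incSyms, enc, List.count_append, List.count_cons, List.count_nil] at *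
  omega

theorem A2Block_perm :
    (A2Block G k).Perm
      ([.u k 0, .u k 1, .u k 2, .u k 3, .u k 4, .u k 5,
        .z k 1, .z k 2, .z k 3, .z k 4, .z k 5, .z k 6] ++ incSyms G k) := by
  refine List.perm_iff_count.2 fun a => ?_
  have h t := (encL_append_encR_perm G k (nthInc G k t)).count_eq a
  have h0 := h 0; have h1 := h 1; have h2 := h 2
  simp only [A2Block, incSyms, List.count_append, List.count_cons, List.count_nil] at *
  omega

variable {G k}

theorem incSyms_nodup (hk : 3 ≤ (incEdges G k).length) : (incSyms G k).Nodup := by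
  have hidx t (ht : t < 3) : edgeIdx G k (nthInc G k t) = t := edgeIdx_nthInc (by omega)
  have hne t t' (ht : t < 3) (ht' : t' < 3) (htt' : t ≠ t')
      (h1 : (nthInc G k t).1 = (nthInc G k t').1) : (nthInc G k t).2 ≠ (nthInc G k t').2 :=
    fun h2 => htt' (by rw [← hidx t ht, ← hidx t' ht', Prod.ext h1 h2])
  simp +contextual [incSyms, encSyms, hidx, hne]

theorem mem_vertices_of_mem_incSyms {a : Sym n} (ha : a ∈ incSyms G k) : k ∈ a.vertices := by
  simp only [incSyms, encSyms, List.mem_append, List.mem_cons, List.not_mem_nil, or_false] at ha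
  rcases ha with ((ha | ha | ha) | (ha | ha | ha)) | (ha | ha | ha) <;> subst ha <;>
    simp [Sym.vertices, eq_fst_or_eq_snd_nthInc]

end Encodings

section Blocks

variable {G : SimpleGraph (Fin n)} [DecidableRel G.Adj] {k : Fin n} {a : Sym n}

theorem vertexBlockX_nodup (hk : 3 ≤ (incEdges G k).length) : (vertexBlockX G k).Nodup :=
  (vertexBlockX_perm G k).nodup_iff.2 <|
    List.nodup_append.2 ⟨by simp, incSyms_nodup hk, by simp [incSyms, encSyms]⟩

theorem A2Block_nodup (hk : 3 ≤ (incEdges G k).length) : (A2Block G k).Nodup :=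
  (A2Block_perm G k).nodup_iff.2 <|
    List.nodup_append.2 ⟨by simp, incSyms_nodup hk, by simp [incSyms, encSyms]⟩

theorem A1Block_nodup : (A1Block k).Nodup := by
  simp [A1Block]

theorem mem_vertices_of_mem_vertexBlockX (ha : a ∈ vertexBlockX G k) : k ∈ a.vertices := by
  rcases List.mem_append.1 ((vertexBlockX_perm G k).mem_iff.1 ha) with ha | ha
  · cases a <;> simp [Sym.vertices] at ha ⊢ <;> omega
  · exact mem_vertices_of_mem_incSyms ha

theorem mem_vertices_of_mem_A2Block (ha : a ∈ A2Block G k) : k ∈ a.vertices := by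
  rcases List.mem_append.1 ((A2Block_perm G k).mem_iff.1 ha) with ha | ha
  · cases a <;> simp [Sym.vertices] at ha ⊢ <;> omega
  · exact mem_vertices_of_mem_incSyms ha

theorem vertices_eq_of_mem_A1Block (ha : a ∈ A1Block k) : a.vertices = {k} := by
  cases a <;> simp [A1Block, Sym.vertices] at ha ⊢ <;> omega

theorem edgeBlockX_nodup {e : Fin n × Fin n} (he : e ∈ edgePairs G) : (edgeBlockX G e).Nodup := by
  have hne : e.1 ≠ e.2 := ((mem_edgePairs G).1 he).1.ne
  simp [edgeBlockX, hne]

theorem mem_edges_of_mem_edgeBlockX {e : Fin n × Fin n} (he : e ∈ edgePairs G)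
    (ha : a ∈ edgeBlockX G e) : e ∈ a.edges G := by
  have h1 : e ∈ incEdges G e.1 := (mem_incEdges G).2 ⟨he, Or.inl rfl⟩
  have h2 : e ∈ incEdges G e.2 := (mem_incEdges G).2 ⟨he, Or.inr rfl⟩
  simp only [edgeBlockX, List.mem_cons, List.not_mem_nil, or_false] at ha
  rcases ha with rfl | rfl | rfl | rfl | rfl <;>
    simp [Sym.edges, nthInc_edgeIdx h1, nthInc_edgeIdx h2]

variable (a)

theorem count_flatMap_vertexBlockX_le_two (hG : ∀ k, 3 ≤ (incEdges G k).length) :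
    ((List.finRange n).flatMap fun i => vertexBlockX G i).count a ≤ 2 :=
  (List.count_flatMap_le_card (List.nodup_finRange n) (fun k _ => vertexBlockX_nodup (hG k))
    a.vertices fun _ _ => mem_vertices_of_mem_vertexBlockX).trans a.card_vertices_le_two

theorem count_flatMap_edgeBlockX_le_one :
    ((edgePairs G).flatMap fun e => edgeBlockX G e).count a ≤ 1 :=
  (List.count_flatMap_le_card (nodup_edgePairs G) (fun _ he => edgeBlockX_nodup he)
    (a.edges G) fun _ he => mem_edges_of_mem_edgeBlockX he).trans (a.card_edges_le_one G)

theorem count_flatMap_ABlocks_le_two (hG : ∀ k, 3 ≤ (incEdges G k).length) :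
    ((List.finRange n).flatMap fun i => A1Block i ++ A2Block G i).count a ≤ 2 := by
  have hA1 : ((List.finRange n).flatMap A1Block).count a ≤ a.vertices.card :=
    List.count_flatMap_le_card (List.nodup_finRange n) (fun _ _ => A1Block_nodup) a.vertices
      fun _ _ ha => (vertices_eq_of_mem_A1Block ha) ▸ Finset.mem_singleton_self _
  have hA2 : ((List.finRange n).flatMap (A2Block G)).count a ≤ a.vertices.card :=
    List.count_flatMap_le_card (List.nodup_finRange n) (fun k _ => A2Block_nodup (hG k))
      a.vertices fun _ _ => mem_vertices_of_mem_A2Block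
  have hsplit : ((List.finRange n).flatMap fun i => A1Block i ++ A2Block G i).count a =
      ((List.finRange n).flatMap A1Block).count a +
        ((List.finRange n).flatMap (A2Block G)).count a := by
    simp only [List.count_flatMap, Function.comp_def, List.count_append, List.sum_map_add]
  by_cases ha : ∃ k, a ∈ A1Block k
  · obtain ⟨k, hk⟩ := ha
    rw [vertices_eq_of_mem_A1Block hk, Finset.card_singleton] at hA1 hA2
    omega
  · have hA1_zero : ((List.finRange n).flatMap A1Block).count a = 0 :=
      List.count_eq_zero.2 (by simpa using ha)
    have := a.card_vertices_le_two
    omega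

end Blocks

end MLA

open MLA in
/-- In the MLA instance `(X, Y)` corresponding to a cubic graph
`G`, every symbol of the alphabet occurs at most 5 times in `X` and at most 5
times in `Y`. -/
theorem at_most_five_occurrences {n : ℕ} (G : SimpleGraph (Fin n))
    [DecidableRel G.Adj] (hcubic : ∀ v : Fin n, G.degree v = 3) (a : Sym n) :
    (genomeX G).count a ≤ 5 ∧ (alignedY G).count (some a) ≤ 5 := by
  have hG k : 3 ≤ (incEdges G k).length := hcubic k ▸ degree_le_length_incEdges G k
  have hA := count_flatMap_ABlocks_le_two a hG
  constructor
  · have hV := count_flatMap_vertexBlockX_le_two a hG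
    have hE := count_flatMap_edgeBlockX_le_one (G := G) a
    rw [genomeX, List.count_append, List.count_append]
    omega
  · have hs : ((List.finRange n).map Sym.s).count a ≤ 1 :=
      List.nodup_iff_count_le_one.1 ((List.nodup_finRange n).map fun _ _ h => Sym.s.inj h) a
    have hse : ((edgePairs G).map fun e => Sym.se e.1 e.2).count a ≤ 1 :=
      List.nodup_iff_count_le_one.1 ((nodup_edgePairs G).map fun _ _ h =>
        Prod.ext (Sym.se.inj h).1 (Sym.se.inj h).2) a
    rw [alignedY, List.count_append, List.count_append,
      List.count_some_flatMap_cons_replicate_none, List.count_some_flatMap_cons_replicate_none,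
      ← List.map_flatMap, List.count_map_of_injective _ _ (Option.some_injective _)]
    omega
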